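/- arXiv:1804.10664 — 8 statements merged into one kernel-verified Lean document; each statement's English description precedes it below -/
import Mathlib

section
/- Suppose fourteen nonzero integers u₁,…,u₇, v₁,…,v₇ satisfy u₁v₁ = 1, u₂v₂ = 2 (so u₁ = v₁ = ±1) with (u₁,v₁) = (−1,−1), (u₂,v₂) = (−1,−2), and the relation Σᵢ (1/uᵢ + 1/vᵢ) = 4. Then among the ten numbers u₃,…,u₇,v₃,…,v₇, counting the number n₁ of 1's and n₂ of 2's, one has 4n₁ + n₂ ≥ 22 and hence n₁ ≥ 4. -/
/-!
The two prescribed pairs contribute `-1 - 1 - 1 - 1/2 = -7/2` to the relation, so the ten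
remaining reciprocals sum to `15/2`. An integer has reciprocal at most `1/3` unless it is `1` or
`2` (whose reciprocals exceed `1/3` by `2/3` and `1/6`), so `15/2 ≤ 10/3 + (2/3) n₁ + (1/6) n₂`,
i.e. `4 n₁ + n₂ ≥ 25`; with `n₂ ≤ 10` this forces `n₁ ≥ 4`.
-/

lemma Int.inv_cast_le (x : ℤ) :
    (x : ℚ)⁻¹ ≤ 1 / 3 + 2 / 3 * (if x = 1 then 1 else 0) + 1 / 6 * (if x = 2 then 1 else 0) := by
  rcases le_or_gt x 0 with hx | hx
  · have : (x : ℚ)⁻¹ ≤ 0 := inv_nonpos.mpr (by exact_mod_cast hx)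
    split_ifs <;> linarith
  obtain rfl | rfl | hx3 : x = 1 ∨ x = 2 ∨ 3 ≤ x := by omega
  · norm_num
  · norm_num
  · have : (x : ℚ)⁻¹ ≤ 3⁻¹ := inv_anti₀ (by norm_num) (by exact_mod_cast hx3)
    rw [if_neg (by omega), if_neg (by omega)]
    linarith

lemma List.sum_map_inv_cast_le (L : List ℤ) :
    (L.map fun x : ℤ => (x : ℚ)⁻¹).sum ≤
      L.length / 3 + 2 / 3 * L.count 1 + 1 / 6 * L.count 2 := by
  induction L with
  | nil => simp
  | cons a t ih =>
    have ha := Int.inv_cast_le a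
    simp only [List.map_cons, List.sum_cons, List.count_cons, List.length_cons, beq_iff_eq]
    push_cast
    linarith

theorem count_ones_and_twos_general (u v : Fin 7 → ℤ)
    (h1 : u 0 = -1) (h1' : v 0 = -1) (h2 : u 1 = -1) (h2' : v 1 = -2)
    (hrel : ∑ i : Fin 7, ((u i : ℚ)⁻¹ + (v i : ℚ)⁻¹) = 4)
    (L : List ℤ) (hL : L = [u 2, u 3, u 4, u 5, u 6, v 2, v 3, v 4, v 5, v 6]) :
    4 * L.count 1 + L.count 2 ≥ 22 ∧ L.count 1 ≥ 4 := by
  have hsum : (L.map fun x : ℤ => (x : ℚ)⁻¹).sum = 15 / 2 := by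
    rw [Fin.sum_univ_seven, h1, h1', h2, h2'] at hrel
    subst hL
    simp only [List.map_cons, List.map_nil, List.sum_cons, List.sum_nil]
    norm_num at hrel
    linarith
  have hlen : L.length = 10 := by simp [hL]
  have hbound := L.sum_map_inv_cast_le
  rw [hsum, hlen] at hbound
  have h25 : 25 ≤ 4 * L.count 1 + L.count 2 := by
    suffices (25 : ℚ) ≤ 4 * L.count 1 + L.count 2 by exact_mod_cast this
    push_cast at hbound
    linarith
  have htwos : L.count 2 ≤ 10 := hlen ▸ L.count_le_length
  omega

theorem count_ones_and_twos (u v : Fin 7 → ℤ)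
    (hu : ∀ i, u i ≠ 0) (hv : ∀ i, v i ≠ 0)
    (h1 : u 0 = -1) (h1' : v 0 = -1) (h2 : u 1 = -1) (h2' : v 1 = -2)
    (hrel : ∑ i : Fin 7, ((u i : ℚ)⁻¹ + (v i : ℚ)⁻¹) = 4)
    (L : List ℤ) (hL : L = [u 2, u 3, u 4, u 5, u 6, v 2, v 3, v 4, v 5, v 6]) :
    4 * L.count 1 + L.count 2 ≥ 22 ∧ L.count 1 ≥ 4 :=
  count_ones_and_twos_general u v h1 h1' h2 h2' hrel L hL
end

section
/- Let (u₁,v₁) = (−1,−1) and (u₂,v₂) = (−1,−2) and let (u₃,v₃),…,(u₇,v₇) be pairs of nonzero integers with Σᵢ₌₁⁷ (1/uᵢ + 1/vᵢ) = 4. If no pair (uᵢ,vᵢ) equals (1,1), then some pair (uᵢ,vᵢ) with 3 ≤ i ≤ 7 equals (1,2) or (2,1). -/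
lemma aux_inv_le (a n : ℤ) (hn : 0 < n) (h : n ≤ a ∨ a < 0) :
    (a : ℚ)⁻¹ ≤ (n : ℚ)⁻¹ := by
  rcases h with h | h
  · exact inv_anti₀ (by exact_mod_cast hn) (by exact_mod_cast h)
  · have : (a : ℚ)⁻¹ < 0 := inv_lt_zero.mpr (by exact_mod_cast h)
    have : (0:ℚ) < (n:ℚ)⁻¹ := by positivity
    linarith

lemma pair_bound (a b : ℤ) (ha : a ≠ 0) (hb : b ≠ 0)
    (h11 : ¬(a = 1 ∧ b = 1)) (h12 : ¬(a = 1 ∧ b = 2)) (h21 : ¬(a = 2 ∧ b = 1)) :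
    (a : ℚ)⁻¹ + (b : ℚ)⁻¹ ≤ 4/3 := by
  by_cases ha1 : a = 1
  · have hb1 : b ≠ 1 := fun h => h11 ⟨ha1, h⟩
    have hb2 : b ≠ 2 := fun h => h12 ⟨ha1, h⟩
    have := aux_inv_le b 3 (by norm_num) (by omega)
    subst ha1; push_cast at this ⊢; linarith
  · by_cases hb1 : b = 1
    · have ha2 : a ≠ 2 := fun h => h21 ⟨h, hb1⟩
      have := aux_inv_le a 3 (by norm_num) (by omega)
      subst hb1; push_cast at this ⊢; linarith
    · have h1 := aux_inv_le a 2 (by norm_num) (by omega)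
      have h2 := aux_inv_le b 2 (by norm_num) (by omega)
      push_cast at h1 h2; linarith

theorem notwopos (u v : Fin 7 → ℤ)
    (hu : ∀ i, u i ≠ 0) (hv : ∀ i, v i ≠ 0)
    (h1 : u 0 = -1) (h1' : v 0 = -1) (h2 : u 1 = -1) (h2' : v 1 = -2)
    (hrel : ∑ i : Fin 7, ((u i : ℚ)⁻¹ + (v i : ℚ)⁻¹) = 4)
    (hno11 : ∀ i, ¬(u i = 1 ∧ v i = 1)) :
    ∃ i : Fin 7, 2 ≤ (i : ℕ) ∧ ((u i = 1 ∧ v i = 2) ∨ (u i = 2 ∧ v i = 1)) := by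
  by_contra hc
  push_neg at hc
  have hb : ∀ i : Fin 7, 2 ≤ (i : ℕ) → (u i : ℚ)⁻¹ + (v i : ℚ)⁻¹ ≤ 4/3 := by
    intro i hi
    have h := hc i hi
    exact pair_bound _ _ (hu i) (hv i) (hno11 i) (fun hh => h.1 hh.1 hh.2)
      (fun hh => h.2 hh.1 hh.2)
  rw [Fin.sum_univ_seven] at hrel
  rw [h1, h1', h2, h2'] at hrel
  have b2 := hb 2 (by decide)
  have b3 := hb 3 (by decide)
  have b4 := hb 4 (by decide)
  have b5 := hb 5 (by decide)
  have b6 := hb 6 (by decide)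
  norm_num at hrel
  linarith
end

section
/- There are no nonzero integers n, ξ₆, ξ₇ with n > 43 such that 1/ξ₆ + 1/ξ₇ + 1/(n(n−1)) = 1/6 and ξ₆ ≠ 6 and ξ₇ ≠ 6. -/
private lemma aux_case (a b N : ℤ) (hN : 1892 ≤ N)
    (ha1 : 1 ≤ a) (ha2 : a ≤ 12) (ha6 : a ≠ 6)
    (E : a * b * N = 6 * (a * N + b * N + a * b)) : False := by
  interval_cases a
  · -- a = 1 : (5b+6)(5N+6) = 36
    rcases le_or_gt b (-2) with h | h <;> nlinarith [E]
  · -- a = 2 : (b+3)(N+3) = 9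
    rcases le_or_gt b (-3) with h | h <;> nlinarith [E]
  · -- a = 3 : (b+6)(N+6) = 36
    rcases le_or_gt b (-6) with h | h <;> nlinarith [E]
  · -- a = 4 : (b+12)(N+12) = 144
    rcases le_or_gt b (-12) with h | h <;> nlinarith [E]
  · -- a = 5 : (b+30)(N+30) = 900
    rcases le_or_gt b (-30) with h | h <;> nlinarith [E]
  · exact ha6 rfl
  · -- a = 7 : (b-42)(N-42) = 1764
    rcases le_or_gt b 42 with h | h <;> nlinarith [E]
  · -- a = 8
    rcases le_or_gt b 24 with h | h <;> nlinarith [E]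
  · -- a = 9
    rcases le_or_gt b 18 with h | h <;> nlinarith [E]
  · -- a = 10
    rcases le_or_gt b 15 with h | h <;> nlinarith [E]
  · -- a = 11 : (5b-66)(5N-66)=4356
    rcases le_or_gt b 13 with h | h <;> nlinarith [E]
  · -- a = 12
    rcases le_or_gt b 12 with h | h <;> nlinarith [E]

theorem no_solutions_large_n :
    ¬ ∃ (n ξ₆ ξ₇ : ℤ), n ≠ 0 ∧ ξ₆ ≠ 0 ∧ ξ₇ ≠ 0 ∧ 43 < n ∧
      (ξ₆ : ℚ)⁻¹ + (ξ₇ : ℚ)⁻¹ + ((n : ℚ) * (n - 1))⁻¹ = 1 / 6 ∧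
      ξ₆ ≠ 6 ∧ ξ₇ ≠ 6 := by
  rintro ⟨n, a, b, hn0, ha0, hb0, hn43, heq, ha6, hb6⟩
  have hn44 : (44 : ℤ) ≤ n := by omega
  have hN : (1892 : ℤ) ≤ n * (n - 1) := by nlinarith
  have haQ : (a : ℚ) ≠ 0 := Int.cast_ne_zero.2 ha0
  have hbQ : (b : ℚ) ≠ 0 := Int.cast_ne_zero.2 hb0
  have hnQ : (n : ℚ) ≠ 0 := Int.cast_ne_zero.2 hn0
  have hn1Q : (n : ℚ) - 1 ≠ 0 := by
    have : (1 : ℤ) ≤ n - 1 := by omega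
    intro h
    have : (n : ℚ) = 1 := by linarith
    have : n = 1 := by exact_mod_cast this
    omega
  have keyQ : (a : ℚ) * b * (n * (n - 1)) =
      6 * (a * (n * (n - 1)) + b * (n * (n - 1)) + a * b) := by
    field_simp at heq
    ring_nf at heq ⊢
    linarith
  have E : a * b * (n * (n - 1)) =
      6 * (a * (n * (n - 1)) + b * (n * (n - 1)) + a * b) := by
    exact_mod_cast keyQ
  set N : ℤ := n * (n - 1) with hNdef
  -- one of a, b lies in [1,12]
  have hsmall : (1 ≤ a ∧ a ≤ 12) ∨ (1 ≤ b ∧ b ≤ 12) := by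
    by_contra hc
    push_neg at hc
    obtain ⟨hca, hcb⟩ := hc
    have ha' : a ≤ -1 ∨ 13 ≤ a := by omega
    have hb' : b ≤ -1 ∨ 13 ≤ b := by omega
    rcases ha' with ha' | ha' <;> rcases hb' with hb' | hb'
    · -- both negative
      nlinarith [mul_pos (by linarith : (0:ℤ) < -a) (by linarith : (0:ℤ) < -b), E]
    · -- a ≤ -1, b ≥ 13
      nlinarith [mul_nonneg (mul_nonneg (by linarith : (0:ℤ) ≤ b - 13) (by linarith : (0:ℤ) ≤ -a)) (by linarith : (0:ℤ) ≤ N - 6),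
        mul_nonneg (by linarith : (0:ℤ) ≤ -a - 1) (by linarith : (0:ℤ) ≤ 7*N - 78), E]
    · -- a ≥ 13, b ≤ -1
      nlinarith [mul_nonneg (mul_nonneg (by linarith : (0:ℤ) ≤ a - 13) (by linarith : (0:ℤ) ≤ -b)) (by linarith : (0:ℤ) ≤ N - 6),
        mul_nonneg (by linarith : (0:ℤ) ≤ -b - 1) (by linarith : (0:ℤ) ≤ 7*N - 78), E]
    · -- both ≥ 13
      nlinarith [mul_pos (by linarith : (0:ℤ) < a - 12) (by linarith : (0:ℤ) < b - 12), E]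
  rcases hsmall with ⟨h1, h2⟩ | ⟨h1, h2⟩
  · exact aux_case a b N hN h1 h2 ha6 E
  · exact aux_case b a N hN h1 h2 hb6 (by linear_combination E)
end

section
/- The planar quadratic system x' = x(2x − 5y), y' = y(y − 4x) has g₃ = −4xy²(x − y)³ as a first integral. -/
/-- `∇g₃ · F = 0` for `g₃ = -4 x y² (x - y)³` and the field `F = (x (2x - 5y), y (y - 4x))`. -/
theorem g3_gradient_dot_field_eq_zero {R : Type*} [CommRing R] (x y : R) :
    (-4 * y ^ 2 * (x - y) ^ 3 - 12 * x * y ^ 2 * (x - y) ^ 2) * (x * (2 * x - 5 * y))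
      + (-8 * x * y * (x - y) ^ 3 + 12 * x * y ^ 2 * (x - y) ^ 2) * (y * (y - 4 * x)) = 0 := by
  ring

theorem first_integral_q236 (x y : ℂ → ℂ) (t : ℂ)
    (hx : HasDerivAt x (x t * (2 * x t - 5 * y t)) t)
    (hy : HasDerivAt y (y t * (y t - 4 * x t)) t) :
    HasDerivAt (fun s => -4 * x s * (y s) ^ 2 * (x s - y s) ^ 3) 0 t := by
  have hg := ((hx.const_mul (-4)).fun_mul (hy.fun_pow 2)).fun_mul ((hx.fun_sub hy).fun_pow 3)
  refine hg.congr_deriv ?_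
  linear_combination g3_gradient_dot_field_eq_zero (x t) (y t)
end

section
/- For m a nonzero integer, x(t) = −1/t and y(t) = −t^{m−1}/(t^m − 1) satisfy the system x' = x², y' = y(my − (m−1)x), and x^m · y/(x − y) is a first integral of this system. -/
section

variable {𝕜 : Type*} [NontriviallyNormedField 𝕜]

theorem hasDerivAt_neg_one_div {t : 𝕜} (ht : t ≠ 0) :
    HasDerivAt (fun s : 𝕜 => -1 / s) ((-1 / t) ^ 2) t := by
  simp only [neg_div, one_div]
  exact (hasDerivAt_inv ht).fun_neg.congr_deriv (by ring)

theorem hasDerivAt_neg_zpow_pred_div_zpow_sub_one (m : ℤ) {t : 𝕜} (ht : t ≠ 0)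
    (htm : t ^ m ≠ 1) :
    HasDerivAt (fun s : 𝕜 => -s ^ (m - 1) / (s ^ m - 1))
      ((-t ^ (m - 1) / (t ^ m - 1)) *
        ((m : 𝕜) * (-t ^ (m - 1) / (t ^ m - 1)) - ((m : 𝕜) - 1) * (-1 / t))) t := by
  have hnum : HasDerivAt (fun s : 𝕜 => -s ^ (m - 1)) (-(((m - 1 : ℤ) : 𝕜) * t ^ (m - 1 - 1))) t :=
    (hasDerivAt_zpow (m - 1) t (Or.inl ht)).neg
  have hden : HasDerivAt (fun s : 𝕜 => s ^ m - 1) ((m : 𝕜) * t ^ (m - 1)) t :=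
    (hasDerivAt_zpow m t (Or.inl ht)).sub_const 1
  have hden_ne : t ^ m - 1 ≠ 0 := sub_ne_zero.mpr htm
  refine (hnum.div hden hden_ne).congr_deriv ?_
  simp only [zpow_sub_one₀ ht]
  field_simp
  push_cast
  ring

/-- Numerator and denominator have the same logarithmic derivative `x + m y`, since
`x² - y (m y - (m - 1) x) = (x - y) (x + m y)`. -/
theorem hasDerivAt_zpow_mul_div_sub_eq_zero (m : ℤ) {x y : 𝕜 → 𝕜} {t : 𝕜}
    (hx0 : x t ≠ 0) (hxy : x t ≠ y t) (hx : HasDerivAt x (x t ^ 2) t)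
    (hy : HasDerivAt y (y t * ((m : 𝕜) * y t - ((m : 𝕜) - 1) * x t)) t) :
    HasDerivAt (fun s => x s ^ m * y s / (x s - y s)) 0 t := by
  have hxm : HasDerivAt (fun s => x s ^ m) ((m : 𝕜) * x t ^ (m - 1) * x t ^ 2) t :=
    (hasDerivAt_zpow m (x t) (Or.inl hx0)).comp t hx
  refine ((hxm.mul hy).div (hx.sub hy) (sub_ne_zero.mpr hxy)).congr_deriv ?_
  simp only [Pi.mul_apply, Pi.sub_apply, zpow_sub_one₀ hx0]
  field_simp
  ring

end

theorem rational_solution_and_first_integral_general (m : ℤ) :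
    (∀ t : ℂ, t ≠ 0 → t ^ m ≠ 1 →
      HasDerivAt (fun s : ℂ => -1 / s) ((-1 / t) ^ 2) t ∧
      HasDerivAt (fun s : ℂ => -s ^ (m - 1) / (s ^ m - 1))
        ((-t ^ (m - 1) / (t ^ m - 1)) *
          ((m : ℂ) * (-t ^ (m - 1) / (t ^ m - 1)) - ((m : ℂ) - 1) * (-1 / t))) t) ∧
    (∀ (x y : ℂ → ℂ) (t : ℂ), x t ≠ 0 → x t ≠ y t →
      HasDerivAt x ((x t) ^ 2) t →
      HasDerivAt y (y t * ((m : ℂ) * y t - ((m : ℂ) - 1) * x t)) t →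
      HasDerivAt (fun s => (x s) ^ m * y s / (x s - y s)) 0 t) :=
  ⟨fun _ ht htm =>
      ⟨hasDerivAt_neg_one_div ht, hasDerivAt_neg_zpow_pred_div_zpow_sub_one m ht htm⟩,
    fun _ _ _ => hasDerivAt_zpow_mul_div_sub_eq_zero m⟩

theorem rational_solution_and_first_integral (m : ℤ) (hm : m ≠ 0) :
    (∀ t : ℂ, t ≠ 0 → t ^ m ≠ 1 →
      HasDerivAt (fun s : ℂ => -1 / s) ((-1 / t) ^ 2) t ∧
      HasDerivAt (fun s : ℂ => -s ^ (m - 1) / (s ^ m - 1))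
        ((-t ^ (m - 1) / (t ^ m - 1)) *
          ((m : ℂ) * (-t ^ (m - 1) / (t ^ m - 1)) - ((m : ℂ) - 1) * (-1 / t))) t) ∧
    (∀ (x y : ℂ → ℂ) (t : ℂ), x t ≠ 0 → x t ≠ y t →
      HasDerivAt x ((x t) ^ 2) t →
      HasDerivAt y (y t * ((m : ℂ) * y t - ((m : ℂ) - 1) * x t)) t →
      HasDerivAt (fun s => (x s) ^ m * y s / (x s - y s)) 0 t) :=
  rational_solution_and_first_integral_general m
end

section
/- Under the substitution w = xy, the system x' = x(x − y + (1−n)z), y' = y(y − x + (1−m)z), z' = z² + αxy projects to w' = (2 − κ)wz, z' = z² + αw, where κ = m + n; consequently z satisfies the second-order equation z'' = (4−κ)zz' − (2−κ)z³, independent of α. -/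
/-! The product `w = x y` of two solutions with logarithmic derivatives `f` and `g` has logarithmic
derivative `f + g`; for the system at hand `f + g = (2 - κ) z`, since the `x - y` terms cancel.
Differentiating `z' = z² + α w` once more and substituting `w' = (2 - κ) w z` and
`α w = z' - z²` eliminates `w`, and with it `α`. -/

section

variable {𝕜 : Type*} [NontriviallyNormedField 𝕜] {x y z w : 𝕜 → 𝕜} {t : 𝕜}

theorem HasDerivAt.mul_of_logDeriv {f g : 𝕜} (hx : HasDerivAt x (x t * f) t)
    (hy : HasDerivAt y (y t * g) t) :
    HasDerivAt (fun s => x s * y s) (x t * y t * (f + g)) t :=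
  (hx.mul hy).congr_deriv (by ring)

theorem HasDerivAt.sq_add_const_mul {c α : 𝕜}
    (hw : HasDerivAt w (c * w t * z t) t) (hz : HasDerivAt z (z t ^ 2 + α * w t) t) :
    HasDerivAt (fun s => z s ^ 2 + α * w s)
      ((c + 2) * z t * (z t ^ 2 + α * w t) - c * z t ^ 3) t :=
  ((hz.pow 2).add (hw.const_mul α)).congr_deriv (by push_cast; ring)

end

theorem reduction_to_second_order (n m : ℤ) (α : ℂ) (x y z : ℂ → ℂ)
    (hx : ∀ t, HasDerivAt x (x t * (x t - y t + (1 - (n : ℂ)) * z t)) t)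
    (hy : ∀ t, HasDerivAt y (y t * (y t - x t + (1 - (m : ℂ)) * z t)) t)
    (hz : ∀ t, HasDerivAt z ((z t) ^ 2 + α * x t * y t) t) :
    (∀ t, HasDerivAt (fun s => x s * y s)
        ((2 - ((m : ℂ) + (n : ℂ))) * (x t * y t) * z t) t) ∧
    (∀ t, HasDerivAt (fun s => (z s) ^ 2 + α * x s * y s)
        ((4 - ((m : ℂ) + (n : ℂ))) * z t * ((z t) ^ 2 + α * x t * y t)
          - (2 - ((m : ℂ) + (n : ℂ))) * (z t) ^ 3) t) := by
  have hw : ∀ t, HasDerivAt (fun s => x s * y s)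
      ((2 - ((m : ℂ) + (n : ℂ))) * (x t * y t) * z t) t := fun t =>
    ((hx t).mul_of_logDeriv (hy t)).congr_deriv (by ring)
  refine ⟨hw, fun t => ?_⟩
  have hz' : HasDerivAt z (z t ^ 2 + α * (x t * y t)) t := by
    simpa only [mul_assoc] using hz t
  simpa only [mul_assoc, show (2 - ((m : ℂ) + n)) + 2 = 4 - (m + n) by ring]
    using (hw t).sq_add_const_mul hz'
end

section
/- If φ is a solution of the Chazy IX equation φ''' = 54φ⁴ + 72φ²φ' + 12(φ')², then x = −φ, y = −(φ² + φ')/φ, z = (8φ³ + 6φφ' − φ'')/(φ² + φ') satisfy the system x' = x(x − y), y' = y(y − 9x − z), z' = z² − 6xy + 14xz, wherever φ, φ² + φ' are nonzero. -/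
/-!
Differentiate each of `x`, `y`, `z` by the quotient rule, replacing `φ'''` by the Chazy IX
right-hand side in the derivative of `z`; each of the three equations of the system is then an
identity of rational functions in the 2-jet `(φ, φ', φ'')`, valid where `φ ≠ 0` and
`φ² + φ' ≠ 0`.
-/

namespace ChazyIX

variable {𝕜 : Type*} [NontriviallyNormedField 𝕜]

/-! The coordinates `x, y, z` of system (XVIII) as functions of the 2-jet
`(p, q, r) = (φ, φ', φ'')`. -/

def coordX (p : 𝕜) : 𝕜 := -p

def coordY (p q : 𝕜) : 𝕜 := -(p ^ 2 + q) / p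

def coordZ (p q r : 𝕜) : 𝕜 := (8 * p ^ 3 + 6 * p * q - r) / (p ^ 2 + q)

variable {φ φ₁ φ₂ : 𝕜 → 𝕜} {t : 𝕜}

theorem hasDerivAt_coordX (hφ : HasDerivAt φ (φ₁ t) t) (hp : φ t ≠ 0) :
    HasDerivAt (fun s => coordX (φ s))
      (coordX (φ t) * (coordX (φ t) - coordY (φ t) (φ₁ t))) t :=
  hφ.fun_neg.congr_deriv (by unfold coordX coordY; field_simp; ring)

theorem hasDerivAt_sq_add (hφ : HasDerivAt φ (φ₁ t) t)
    (hφ₁ : HasDerivAt φ₁ (φ₂ t) t) :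
    HasDerivAt (fun s => φ s ^ 2 + φ₁ s) (2 * φ t * φ₁ t + φ₂ t) t :=
  ((hφ.pow 2).add hφ₁).congr_deriv (by ring)

theorem hasDerivAt_coordY (hφ : HasDerivAt φ (φ₁ t) t) (hφ₁ : HasDerivAt φ₁ (φ₂ t) t)
    (hp : φ t ≠ 0) (hq : φ t ^ 2 + φ₁ t ≠ 0) :
    HasDerivAt (fun s => coordY (φ s) (φ₁ s))
      (coordY (φ t) (φ₁ t) *
        (coordY (φ t) (φ₁ t) - 9 * coordX (φ t) - coordZ (φ t) (φ₁ t) (φ₂ t))) t :=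
  ((hasDerivAt_sq_add hφ hφ₁).fun_neg.div hφ hp).congr_deriv
    (by unfold coordX coordY coordZ; field_simp; ring)

theorem hasDerivAt_coordZ (hφ : HasDerivAt φ (φ₁ t) t) (hφ₁ : HasDerivAt φ₁ (φ₂ t) t)
    (hφ₂ : HasDerivAt φ₂ (54 * φ t ^ 4 + 72 * φ t ^ 2 * φ₁ t + 12 * φ₁ t ^ 2) t)
    (hp : φ t ≠ 0) (hq : φ t ^ 2 + φ₁ t ≠ 0) :
    HasDerivAt (fun s => coordZ (φ s) (φ₁ s) (φ₂ s))
      (coordZ (φ t) (φ₁ t) (φ₂ t) ^ 2 - 6 * coordX (φ t) * coordY (φ t) (φ₁ t)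
        + 14 * coordX (φ t) * coordZ (φ t) (φ₁ t) (φ₂ t)) t := by
  have hnum : HasDerivAt (fun s => 8 * φ s ^ 3 + 6 * φ s * φ₁ s - φ₂ s)
      (8 * (3 * φ t ^ 2 * φ₁ t) + (6 * φ₁ t * φ₁ t + 6 * φ t * φ₂ t)
        - (54 * φ t ^ 4 + 72 * φ t ^ 2 * φ₁ t + 12 * φ₁ t ^ 2)) t :=
    ((((hφ.pow 3).const_mul 8).add ((hφ.const_mul 6).mul hφ₁)).sub hφ₂).congr_deriv
      (by ring)
  exact (hnum.div (hasDerivAt_sq_add hφ hφ₁) hq).congr_deriv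
    (by unfold coordX coordY coordZ; field_simp; ring)

end ChazyIX

open ChazyIX in
theorem chazyIX_to_system (φ φ₁ φ₂ : ℂ → ℂ)
    (hφ : ∀ t, HasDerivAt φ (φ₁ t) t)
    (hφ₁ : ∀ t, HasDerivAt φ₁ (φ₂ t) t)
    (hφ₂ : ∀ t, HasDerivAt φ₂
      (54 * (φ t) ^ 4 + 72 * (φ t) ^ 2 * φ₁ t + 12 * (φ₁ t) ^ 2) t)
    (x y z : ℂ → ℂ)
    (hx : ∀ t, x t = -φ t)
    (hy : ∀ t, y t = -((φ t) ^ 2 + φ₁ t) / φ t)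
    (hz : ∀ t, z t = (8 * (φ t) ^ 3 + 6 * φ t * φ₁ t - φ₂ t) / ((φ t) ^ 2 + φ₁ t))
    (t : ℂ) (h1 : φ t ≠ 0) (h2 : (φ t) ^ 2 + φ₁ t ≠ 0) :
    HasDerivAt x (x t * (x t - y t)) t ∧
    HasDerivAt y (y t * (y t - 9 * x t - z t)) t ∧
    HasDerivAt z ((z t) ^ 2 - 6 * x t * y t + 14 * x t * z t) t := by
  obtain rfl : x = fun s => coordX (φ s) := funext hx
  obtain rfl : y = fun s => coordY (φ s) (φ₁ s) := funext hy
  obtain rfl : z = fun s => coordZ (φ s) (φ₁ s) (φ₂ s) := funext hz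
  exact ⟨hasDerivAt_coordX (hφ t) h1, hasDerivAt_coordY (hφ t) (hφ₁ t) h1 h2,
    hasDerivAt_coordZ (hφ t) (hφ₁ t) (hφ₂ t) h1 h2⟩
end

section
/- Define H = u₂u₁³ + u₂v₁² − v₂² − 2u₂²u₁ and K = u₁⁴ − 2v₁v₂ + u₂² − 3u₁²u₂ + u₁v₁² on ℂ⁴. Then H and K are first integrals of the vector field X = v₁∂_{u₁} + v₂∂_{u₂} + (1/2)(2u₂ − 3u₁²)∂_{v₁} + (1/2)(u₁³ + v₁² − 4u₂u₁)∂_{v₂}, i.e., X(H) = 0 and X(K) = 0 identically. -/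
def burnsideH (u₁ u₂ v₁ v₂ : ℂ) : ℂ := u₂ * u₁ ^ 3 + u₂ * v₁ ^ 2 - v₂ ^ 2 - 2 * u₂ ^ 2 * u₁

def burnsideK (u₁ u₂ v₁ v₂ : ℂ) : ℂ :=
  u₁ ^ 4 - 2 * v₁ * v₂ + u₂ ^ 2 - 3 * u₁ ^ 2 * u₂ + u₁ * v₁ ^ 2

noncomputable def derivAlongBurnsideField (F : ℂ → ℂ → ℂ → ℂ → ℂ) (u₁ u₂ v₁ v₂ : ℂ) : ℂ :=
  v₁ * deriv (fun s => F s u₂ v₁ v₂) u₁ +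
    v₂ * deriv (fun s => F u₁ s v₁ v₂) u₂ +
    (1 / 2) * (2 * u₂ - 3 * u₁ ^ 2) * deriv (fun s => F u₁ u₂ s v₂) v₁ +
    (1 / 2) * (u₁ ^ 3 + v₁ ^ 2 - 4 * u₂ * u₁) * deriv (fun s => F u₁ u₂ v₁ s) v₂

section FirstIntegrals

variable (u₁ u₂ v₁ v₂ : ℂ)

theorem partials_burnsideH :
    deriv (fun s => burnsideH s u₂ v₁ v₂) u₁ = 3 * u₂ * u₁ ^ 2 - 2 * u₂ ^ 2 ∧
    deriv (fun s => burnsideH u₁ s v₁ v₂) u₂ = u₁ ^ 3 + v₁ ^ 2 - 4 * u₂ * u₁ ∧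
    deriv (fun s => burnsideH u₁ u₂ s v₂) v₁ = 2 * u₂ * v₁ ∧
    deriv (fun s => burnsideH u₁ u₂ v₁ s) v₂ = -2 * v₂ := by
  refine ⟨?_, ?_, ?_, ?_⟩ <;>
  · simp (disch := fun_prop) only [burnsideH, deriv_fun_add, deriv_fun_sub, deriv_fun_mul,
      deriv_fun_pow, deriv_id'', deriv_const', deriv_const_mul_id']
    push_cast
    ring

theorem partials_burnsideK :
    deriv (fun s => burnsideK s u₂ v₁ v₂) u₁ = 4 * u₁ ^ 3 - 6 * u₁ * u₂ + v₁ ^ 2 ∧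
    deriv (fun s => burnsideK u₁ s v₁ v₂) u₂ = 2 * u₂ - 3 * u₁ ^ 2 ∧
    deriv (fun s => burnsideK u₁ u₂ s v₂) v₁ = 2 * u₁ * v₁ - 2 * v₂ ∧
    deriv (fun s => burnsideK u₁ u₂ v₁ s) v₂ = -2 * v₁ := by
  refine ⟨?_, ?_, ?_, ?_⟩ <;>
  · simp (disch := fun_prop) only [burnsideK, deriv_fun_add, deriv_fun_sub, deriv_fun_mul,
      deriv_fun_pow, deriv_id'', deriv_const', deriv_const_mul_id']
    push_cast
    ring

theorem derivAlongBurnsideField_burnsideH : derivAlongBurnsideField burnsideH u₁ u₂ v₁ v₂ = 0 := by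
  obtain ⟨h₁, h₂, h₃, h₄⟩ := partials_burnsideH u₁ u₂ v₁ v₂
  rw [derivAlongBurnsideField, h₁, h₂, h₃, h₄]
  ring

theorem derivAlongBurnsideField_burnsideK : derivAlongBurnsideField burnsideK u₁ u₂ v₁ v₂ = 0 := by
  obtain ⟨h₁, h₂, h₃, h₄⟩ := partials_burnsideK u₁ u₂ v₁ v₂
  rw [derivAlongBurnsideField, h₁, h₂, h₃, h₄]
  ring

end FirstIntegrals

theorem burnside_first_integrals
    (H K : ℂ → ℂ → ℂ → ℂ → ℂ)
    (hH : ∀ u₁ u₂ v₁ v₂ : ℂ,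
      H u₁ u₂ v₁ v₂ = u₂ * u₁ ^ 3 + u₂ * v₁ ^ 2 - v₂ ^ 2 - 2 * u₂ ^ 2 * u₁)
    (hK : ∀ u₁ u₂ v₁ v₂ : ℂ,
      K u₁ u₂ v₁ v₂ = u₁ ^ 4 - 2 * v₁ * v₂ + u₂ ^ 2 - 3 * u₁ ^ 2 * u₂ + u₁ * v₁ ^ 2) :
    ∀ u₁ u₂ v₁ v₂ : ℂ,
      (v₁ * deriv (fun s => H s u₂ v₁ v₂) u₁ +
       v₂ * deriv (fun s => H u₁ s v₁ v₂) u₂ +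
       (1 / 2) * (2 * u₂ - 3 * u₁ ^ 2) * deriv (fun s => H u₁ u₂ s v₂) v₁ +
       (1 / 2) * (u₁ ^ 3 + v₁ ^ 2 - 4 * u₂ * u₁) * deriv (fun s => H u₁ u₂ v₁ s) v₂ = 0) ∧
      (v₁ * deriv (fun s => K s u₂ v₁ v₂) u₁ +
       v₂ * deriv (fun s => K u₁ s v₁ v₂) u₂ +
       (1 / 2) * (2 * u₂ - 3 * u₁ ^ 2) * deriv (fun s => K u₁ u₂ s v₂) v₁ +
       (1 / 2) * (u₁ ^ 3 + v₁ ^ 2 - 4 * u₂ * u₁) * deriv (fun s => K u₁ u₂ v₁ s) v₂ = 0) := by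
  obtain rfl : H = burnsideH := by funext u₁ u₂ v₁ v₂; exact hH u₁ u₂ v₁ v₂
  obtain rfl : K = burnsideK := by funext u₁ u₂ v₁ v₂; exact hK u₁ u₂ v₁ v₂
  intro u₁ u₂ v₁ v₂
  exact ⟨derivAlongBurnsideField_burnsideH u₁ u₂ v₁ v₂,
    derivAlongBurnsideField_burnsideK u₁ u₂ v₁ v₂⟩
end
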